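/- arXiv:1905.12734 — 4 statements merged into one kernel-verified Lean document; each statement's English description precedes it below -/
import Mathlib

section
/- Let J be a finite index set, let d : J → ℤ be constant increments, and let P : J → ℕ → Prop be a family of decidable, pairwise mutually exclusive guards (for all j ≠ j' and all x, not both P j x and P j' x hold). Let i0 : ℕ and let m : ℕ → ℤ be a sequence such that for every k, either there exists j ∈ J with P j (i0 + k) and m (k+1) = m k + d j, or no guard holds at i0 + k and m (k+1) = m k. Then for every n : ℕ, m n = m 0 + ∑_{j ∈ J} d j * (card of the set of x in the interval [i0, i0 + n) with P j x). -/
/-!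
Under mutually exclusive guards the increment at step `k` is `∑ j, [P j (i0 + k)] * d j`, since at
most one summand survives. Telescoping and swapping the two sums turns `m n - m 0` into
`∑ j, d j * #{x ∈ [i0, i0 + n) | P j x}`.
-/

open Finset

lemma Fintype.sum_ite_eq_of_exclusive {J M : Type*} [Fintype J] [AddCommMonoid M]
    {p : J → Prop} [DecidablePred p] (hexcl : ∀ j j', j ≠ j' → ¬(p j ∧ p j'))
    (d : J → M) {j : J} (hj : p j) :
    ∑ j', (if p j' then d j' else 0) = d j := by
  rw [Finset.sum_eq_single j (fun j' _ hne => if_neg fun hj' => hexcl j' j hne ⟨hj', hj⟩)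
    (absurd (mem_univ j)), if_pos hj]

lemma Finset.sum_range_ite_add_eq_card_filter_Ico_nsmul {M : Type*} [AddCommMonoid M]
    (p : ℕ → Prop) [DecidablePred p] (c : M) (a n : ℕ) :
    ∑ k ∈ range n, (if p (a + k) then c else 0) = #{x ∈ Ico a (a + n) | p x} • c := by
  rw [← sum_const, sum_filter, sum_Ico_eq_sum_range, Nat.add_sub_cancel_left]

/-- Correctness of the `counter` summary rule for dependency-free loops:
a counter incremented by a cycle-specific constant `d j` whenever guard `P j`
holds at the induction variable's current value (starting at `i0`, incremented
by 1 per iteration) satisfies the closed-form summary after `n` iterations. -/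
theorem counter_rule_correct {J : Type*} [Fintype J]
    (d : J → ℤ) (P : J → ℕ → Prop) [∀ j x, Decidable (P j x)]
    (hexcl : ∀ j j', j ≠ j' → ∀ x, ¬(P j x ∧ P j' x))
    (i0 : ℕ) (m : ℕ → ℤ)
    (hstep : ∀ k : ℕ,
      (∃ j : J, P j (i0 + k) ∧ m (k + 1) = m k + d j) ∨
      ((∀ j : J, ¬ P j (i0 + k)) ∧ m (k + 1) = m k)) :
    ∀ n : ℕ, m n = m 0 +
      ∑ j : J, d j * (((Finset.Ico i0 (i0 + n)).filter (fun x => P j x)).card : ℤ) := by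
  have hincr : ∀ k, m (k + 1) - m k = ∑ j, if P j (i0 + k) then d j else 0 := by
    intro k
    rcases hstep k with ⟨j, hj, hm⟩ | ⟨hnone, hm⟩
    · rw [hm, Fintype.sum_ite_eq_of_exclusive (fun j j' hne => hexcl j j' hne _) d hj,
        add_sub_cancel_left]
    · simp [hm, hnone]
  intro n
  calc m n = m 0 + ∑ k ∈ range n, (m (k + 1) - m k) := eq_sum_range_sub m n
    _ = m 0 + ∑ j, ∑ k ∈ range n, if P j (i0 + k) then d j else 0 := by
      simp_rw [hincr]; rw [sum_comm]
    _ = _ := by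
      simp_rw [sum_range_ite_add_eq_card_filter_Ico_nsmul, nsmul_eq_mul, mul_comm]
end

section
/- Let α be a type, J a finite index set, e : J → ℕ → α a family of update expressions depending only on the index, and P : J → ℕ → Prop a family of decidable, pairwise mutually exclusive guards. Let i0 : ℕ and let a : ℕ → (ℕ → α) be a sequence of arrays such that for every k, either there exists j ∈ J with P j (i0 + k) and a (k+1) = Function.update (a k) (i0 + k) (e j (i0 + k)), or no guard holds at i0 + k and a (k+1) = a k. Then for every n : ℕ, every j ∈ J, and every x in the interval [i0, i0 + n), if P j x holds then a n x = e j x. -/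
/-!
Once step `k` of the loop has run, the array entry at `i0 + k` is `e j (i0 + k)` for the unique
`j` whose guard holds there, and no later step touches that entry again, because later steps
only write at larger indices.
-/

open Function

def GuardedWrite {α J : Type*} (e : J → ℕ → α) (P : J → ℕ → Prop) (y : ℕ) (b b' : ℕ → α) :
    Prop :=
  (∃ j, P j y ∧ b' = update b y (e j y)) ∨ ((∀ j, ¬P j y) ∧ b' = b)

namespace GuardedWrite

variable {α J : Type*} {e : J → ℕ → α} {P : J → ℕ → Prop} {y : ℕ} {b b' : ℕ → α}

theorem apply_of_ne (h : GuardedWrite e P y b b') {x : ℕ} (hx : x ≠ y) : b' x = b x := by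
  rcases h with ⟨j, -, rfl⟩ | ⟨-, rfl⟩
  · exact update_of_ne hx _ _
  · rfl

theorem apply_self (hexcl : ∀ j j', j ≠ j' → ∀ x, ¬(P j x ∧ P j' x))
    (h : GuardedWrite e P y b b') {j : J} (hP : P j y) : b' y = e j y := by
  rcases h with ⟨j', hP', rfl⟩ | ⟨hnone, -⟩
  · obtain rfl : j' = j := by_contra fun hne => hexcl j' j hne y ⟨hP', hP⟩
    exact update_self _ _ _
  · exact absurd hP (hnone j)

end GuardedWrite

theorem apply_eq_of_lt_of_update_only_at {α : Type*} {a : ℕ → ℕ → α} {i0 : ℕ}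
    (hfix : ∀ k x, x ≠ i0 + k → a (k + 1) x = a k x) {m n x : ℕ} (hmn : m ≤ n)
    (hx : x < i0 + m) : a n x = a m x := by
  induction n, hmn using Nat.le_induction with
  | base => rfl
  | succ n hmn ih => rw [hfix n x (by omega), ih]

theorem write_array_rule_correct_general {α : Type*} {J : Type*}
    (e : J → ℕ → α) (P : J → ℕ → Prop)
    (hexcl : ∀ j j', j ≠ j' → ∀ x, ¬(P j x ∧ P j' x))
    (i0 : ℕ) (a : ℕ → ℕ → α)
    (hstep : ∀ k : ℕ,
      (∃ j : J, P j (i0 + k) ∧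
        a (k + 1) = Function.update (a k) (i0 + k) (e j (i0 + k))) ∨
      ((∀ j : J, ¬ P j (i0 + k)) ∧ a (k + 1) = a k)) :
    ∀ n : ℕ, ∀ j : J, ∀ x ∈ Finset.Ico i0 (i0 + n), P j x → a n x = e j x := by
  have hwrite (k : ℕ) : GuardedWrite e P (i0 + k) (a k) (a (k + 1)) := hstep k
  intro n j x hx hP
  obtain ⟨k, rfl⟩ := Nat.exists_eq_add_of_le (Finset.mem_Ico.mp hx).1
  have hkn : k + 1 ≤ n := by simp only [Finset.mem_Ico] at hx; omega
  calc a n (i0 + k) = a (k + 1) (i0 + k) :=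
        apply_eq_of_lt_of_update_only_at (fun k _ hx => (hwrite k).apply_of_ne hx) hkn (by omega)
    _ = e j (i0 + k) := (hwrite k).apply_self hexcl hP

/-- Correctness of the `write-array` summary rule: an i-indexed write array,
updated at the induction variable's index (starting at `i0`, stride 1) with a
value `e j` depending only on the index, has value `e j x` at any index
`x ∈ [i0, i0 + n)` whose guard `P j` holds, after `n` iterations. -/
theorem write_array_rule_correct {α : Type*} {J : Type*} [Fintype J]
    (e : J → ℕ → α) (P : J → ℕ → Prop) [∀ j x, Decidable (P j x)]
    (hexcl : ∀ j j', j ≠ j' → ∀ x, ¬(P j x ∧ P j' x))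
    (i0 : ℕ) (a : ℕ → ℕ → α)
    (hstep : ∀ k : ℕ,
      (∃ j : J, P j (i0 + k) ∧
        a (k + 1) = Function.update (a k) (i0 + k) (e j (i0 + k))) ∨
      ((∀ j : J, ¬ P j (i0 + k)) ∧ a (k + 1) = a k)) :
    ∀ n : ℕ, ∀ j : J, ∀ x ∈ Finset.Ico i0 (i0 + n), P j x → a n x = e j x :=
  write_array_rule_correct_general e P hexcl i0 a hstep
end

section
/- Let α be a type, J a finite index set, e : J → ℕ → α, and P : J → ℕ → Prop a family of decidable, pairwise mutually exclusive guards. Let i0 : ℕ and let a : ℕ → (ℕ → α) satisfy: for every k, either there exists j ∈ J with P j (i0 + k) and a (k+1) = Function.update (a k) (i0 + k) (e j (i0 + k)), or no guard holds at i0 + k and a (k+1) = a k. Then for every n : ℕ and every x : ℕ, a n x equals e j x if x lies in [i0, i0 + n) and P j x holds for some (necessarily unique) j ∈ J, and a n x equals a 0 x otherwise. -/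
/-! Iteration `k` touches only cell `i0 + k`, so cell `x` changes at most once, at iteration
`x - i0`, and only if some guard holds at `x`; mutual exclusivity of the guards then determines
the value written there. -/

theorem Nat.apply_eq_of_forall_succ_eq {β : Type*} {f : ℕ → β} {m n : ℕ} (hmn : m ≤ n)
    (h : ∀ k, m ≤ k → k < n → f (k + 1) = f k) : f n = f m := by
  induction n, hmn using Nat.le_induction with
  | base => rfl
  | succ n hmn ih =>
    rw [h n hmn n.lt_succ_self, ih fun k hmk hkn => h k hmk (by omega)]

def WriteStep {α J : Type*} (e : J → ℕ → α) (P : J → ℕ → Prop) (i : ℕ) (b b' : ℕ → α) : Prop :=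
  (∃ j, P j i ∧ b' = Function.update b i (e j i)) ∨ ((∀ j, ¬ P j i) ∧ b' = b)

namespace WriteStep

variable {α J : Type*} {e : J → ℕ → α} {P : J → ℕ → Prop} {i x : ℕ} {b b' : ℕ → α}

theorem apply_of_ne (h : WriteStep e P i b b') (hx : x ≠ i) : b' x = b x := by
  rcases h with ⟨j, -, rfl⟩ | ⟨-, rfl⟩
  · exact Function.update_of_ne hx _ _
  · rfl

theorem apply_of_forall_not (h : WriteStep e P i b b') (hx : ∀ j, ¬ P j x) : b' x = b x := by
  rcases eq_or_ne x i with rfl | hne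
  · rcases h with ⟨j, hj, -⟩ | ⟨-, rfl⟩
    · exact absurd hj (hx j)
    · rfl
  · exact h.apply_of_ne hne

theorem apply_self (hexcl : ∀ j j', j ≠ j' → ∀ x, ¬(P j x ∧ P j' x))
    (h : WriteStep e P i b b') {j : J} (hj : P j i) : b' i = e j i := by
  rcases h with ⟨j', hj', rfl⟩ | ⟨hnone, -⟩
  · obtain rfl : j' = j := by_contra fun hne => hexcl j' j hne i ⟨hj', hj⟩
    exact Function.update_self _ _ _
  · exact absurd hj (hnone j)

end WriteStep

theorem write_array_rule_exact_general {α : Type*} {J : Type*}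
    (e : J → ℕ → α) (P : J → ℕ → Prop)
    (hexcl : ∀ j j', j ≠ j' → ∀ x, ¬(P j x ∧ P j' x))
    (i0 : ℕ) (a : ℕ → ℕ → α)
    (hstep : ∀ k : ℕ,
      (∃ j : J, P j (i0 + k) ∧
        a (k + 1) = Function.update (a k) (i0 + k) (e j (i0 + k))) ∨
      ((∀ j : J, ¬ P j (i0 + k)) ∧ a (k + 1) = a k)) :
    ∀ n : ℕ, ∀ x : ℕ,
      (∀ j : J, x ∈ Finset.Ico i0 (i0 + n) → P j x → a n x = e j x) ∧
      ((¬ ∃ j : J, x ∈ Finset.Ico i0 (i0 + n) ∧ P j x) → a n x = a 0 x) := by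
  have hstep' : ∀ k, WriteStep e P (i0 + k) (a k) (a (k + 1)) := hstep
  intro n x
  refine ⟨fun j hx hPx => ?_, fun hnone => ?_⟩
  · obtain ⟨hlo, hhi⟩ := Finset.mem_Ico.1 hx
    obtain ⟨k, rfl⟩ := Nat.exists_eq_add_of_le hlo
    calc a n (i0 + k) = a (k + 1) (i0 + k) :=
          Nat.apply_eq_of_forall_succ_eq (f := (a · (i0 + k))) (by omega)
            fun m hm _ => (hstep' m).apply_of_ne (by omega)
      _ = e j (i0 + k) := (hstep' k).apply_self hexcl hPx
  · refine Nat.apply_eq_of_forall_succ_eq (f := (a · x)) n.zero_le fun k _ hk => ?_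
    by_cases hx : x ∈ Finset.Ico i0 (i0 + n)
    · exact (hstep' k).apply_of_forall_not fun j hj => hnone ⟨j, hx, hj⟩
    · exact (hstep' k).apply_of_ne (by rw [Finset.mem_Ico] at hx; omega)

/-- Full exactness of the `write-array` summary rule: after `n` iterations,
each cell `x` of an i-indexed write array equals `e j x` if `x ∈ [i0, i0 + n)`
and the (necessarily unique) guard `P j` holds at `x`, and equals its initial
value otherwise. -/
theorem write_array_rule_exact {α : Type*} {J : Type*} [Fintype J]
    (e : J → ℕ → α) (P : J → ℕ → Prop) [∀ j x, Decidable (P j x)]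
    (hexcl : ∀ j j', j ≠ j' → ∀ x, ¬(P j x ∧ P j' x))
    (i0 : ℕ) (a : ℕ → ℕ → α)
    (hstep : ∀ k : ℕ,
      (∃ j : J, P j (i0 + k) ∧
        a (k + 1) = Function.update (a k) (i0 + k) (e j (i0 + k))) ∨
      ((∀ j : J, ¬ P j (i0 + k)) ∧ a (k + 1) = a k)) :
    ∀ n : ℕ, ∀ x : ℕ,
      (∀ j : J, x ∈ Finset.Ico i0 (i0 + n) → P j x → a n x = e j x) ∧
      ((¬ ∃ j : J, x ∈ Finset.Ico i0 (i0 + n) ∧ P j x) → a n x = a 0 x) :=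
  write_array_rule_exact_general e P hexcl i0 a hstep
end

section
/- Let α be a type, ι and κ index sets for counters and arrays, and J a finite index set of cycles with decidable, pairwise mutually exclusive guards P : J → ℕ → Prop. Let d : ι → J → ℤ and e : κ → J → ℕ → α. Let i0 : ℕ, and consider sequences m : ι → ℕ → ℤ and a : κ → ℕ → (ℕ → α) such that for every k: if there exists j ∈ J with P j (i0 + k), then for each counter c, m c (k+1) = m c k + d c j, and for each array b, a b (k+1) = Function.update (a b k) (i0 + k) (e b j (i0 + k)); if no guard holds at i0 + k, then m c (k+1) = m c k and a b (k+1) = a b k for all c, b. Then for every n : ℕ: (i) for each counter c, m c n = m c 0 + ∑_{j ∈ J} d c j * (card of {x ∈ [i0, i0+n) | P j x}); and (ii) for each array b and each x ∈ [i0, i0+n) with P j x, a b n x = e b j x, while a b n x = a b 0 x for x outside [i0, i0+n). -/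
/-!
Since the cycle guards are mutually exclusive, iteration `k` adds to counter `c` exactly
`∑ j, d c j * [P j (i0 + k)]`, so telescoping and swapping the two sums counts, for each cycle,
the indices in `[i0, i0 + n)` where its guard holds. Iteration `k` touches an array only at the
cell `i0 + k`, so a cell outside `[i0, i0 + n)` keeps its initial value, and the cell `i0 + k`
keeps the value written at iteration `k` through all later iterations.
-/

open Finset

section Guards

variable {J β : Type*} {P : J → β → Prop}

theorem eq_of_guard_of_guard (hexcl : ∀ j j', j ≠ j' → ∀ x, ¬(P j x ∧ P j' x)) {j j' : J} {x : β}
    (hj : P j x) (hj' : P j' x) : j = j' :=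
  by_contra fun hne => hexcl j j' hne x ⟨hj, hj'⟩

variable [Fintype J] [∀ j x, Decidable (P j x)] {R : Type*} [NonAssocSemiring R]

theorem sum_mul_ite_guard_of_guard (hexcl : ∀ j j', j ≠ j' → ∀ x, ¬(P j x ∧ P j' x))
    (d : J → R) {j₀ : J} {x : β} (hj₀ : P j₀ x) :
    ∑ j, d j * (if P j x then 1 else 0) = d j₀ := by
  rw [Fintype.sum_eq_single j₀ fun j hj => by
    rw [if_neg fun h => hj (eq_of_guard_of_guard hexcl h hj₀), mul_zero]]
  simp [hj₀]

theorem sum_sum_mul_ite_guard (d : J → R) (s : Finset β) :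
    ∑ x ∈ s, ∑ j, d j * (if P j x then 1 else 0) = ∑ j, d j * (#(s.filter (P j)) : R) := by
  rw [Finset.sum_comm]
  simp only [← Finset.mul_sum, Finset.sum_boole]

end Guards

theorem eq_add_sum_Ico_of_succ_eq_add {G : Type*} [AddCommGroup G] {m : ℕ → G} {f : ℕ → G}
    {i0 : ℕ} (hm : ∀ k, m (k + 1) = m k + f (i0 + k)) (n : ℕ) :
    m n = m 0 + ∑ x ∈ Ico i0 (i0 + n), f x := by
  rw [Finset.sum_Ico_eq_sum_range, Nat.add_sub_cancel_left, Finset.eq_sum_range_sub m n]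
  simp [hm]

theorem apply_eq_of_notMem_Ico {α : Type*} {a : ℕ → ℕ → α} {i0 : ℕ}
    (hframe : ∀ k y, y ≠ i0 + k → a (k + 1) y = a k y) {l n : ℕ} (hln : l ≤ n) {y : ℕ}
    (hy : y ∉ Ico (i0 + l) (i0 + n)) : a n y = a l y := by
  induction n, hln using Nat.le_induction with
  | base => rfl
  | succ n hln ih =>
    rw [Finset.mem_Ico] at hy
    rw [hframe n y (by omega), ih (by rw [Finset.mem_Ico]; omega)]

/-- A summary is always inferable for a dependency-free loop: the joint
closed-form summary of all counters and all i-indexed write arrays after an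
arbitrary number `n` of iterations is the conjunction of the `counter` rule
and the `write-array` rule (including the frame property for untouched cells). -/
theorem dependency_free_loop_summary {α : Type*} {ι κ J : Type*} [Fintype J]
    (P : J → ℕ → Prop) [∀ j x, Decidable (P j x)]
    (hexcl : ∀ j j', j ≠ j' → ∀ x, ¬(P j x ∧ P j' x))
    (d : ι → J → ℤ) (e : κ → J → ℕ → α)
    (i0 : ℕ) (m : ι → ℕ → ℤ) (a : κ → ℕ → ℕ → α)
    (hstep : ∀ k : ℕ,
      (∃ j : J, P j (i0 + k) ∧
        (∀ c : ι, m c (k + 1) = m c k + d c j) ∧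
        (∀ b : κ, a b (k + 1) = Function.update (a b k) (i0 + k) (e b j (i0 + k)))) ∨
      ((∀ j : J, ¬ P j (i0 + k)) ∧
        (∀ c : ι, m c (k + 1) = m c k) ∧
        (∀ b : κ, a b (k + 1) = a b k))) :
    ∀ n : ℕ,
      (∀ c : ι, m c n = m c 0 +
        ∑ j : J, d c j * (((Finset.Ico i0 (i0 + n)).filter (fun x => P j x)).card : ℤ)) ∧
      (∀ b : κ, ∀ j : J, ∀ x ∈ Finset.Ico i0 (i0 + n), P j x → a b n x = e b j x) ∧
      (∀ b : κ, ∀ x : ℕ, x ∉ Finset.Ico i0 (i0 + n) → a b n x = a b 0 x) := by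
  have hcounter : ∀ c k, m c (k + 1) = m c k + ∑ j, d c j * (if P j (i0 + k) then 1 else 0) := by
    intro c k
    rcases hstep k with ⟨j, hj, hm, -⟩ | ⟨hno, hm, -⟩
    · rw [hm, sum_mul_ite_guard_of_guard hexcl _ hj]
    · simp [hm, hno]
  have hframe : ∀ b k y, y ≠ i0 + k → a b (k + 1) y = a b k y := by
    intro b k y hy
    rcases hstep k with ⟨j, -, -, ha⟩ | ⟨-, -, ha⟩
    · rw [ha, Function.update_of_ne hy]
    · rw [ha]
  have hwrite : ∀ b j k, P j (i0 + k) → a b (k + 1) (i0 + k) = e b j (i0 + k) := by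
    intro b j k hj
    rcases hstep k with ⟨j', hj', -, ha⟩ | ⟨hno, -⟩
    · rw [ha, Function.update_self, eq_of_guard_of_guard hexcl hj hj']
    · exact absurd hj (hno j)
  intro n
  refine ⟨fun c => ?_, fun b j x hx hPx => ?_, fun b x hx => ?_⟩
  · rw [eq_add_sum_Ico_of_succ_eq_add (m := m c)
      (f := fun x => ∑ j, d c j * if P j x then 1 else 0) (hcounter c) n, sum_sum_mul_ite_guard]
  · obtain ⟨k, rfl⟩ := Nat.exists_eq_add_of_le (Finset.mem_Ico.mp hx).1
    have hk : k < n := by simpa using (Finset.mem_Ico.mp hx).2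
    rw [apply_eq_of_notMem_Ico (hframe b) hk (by simp), hwrite b j k hPx]
  · exact apply_eq_of_notMem_Ico (hframe b) n.zero_le (by simpa using hx)
end
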